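/- arXiv:0706.3295 — 7 statements merged into one kernel-verified Lean document; each statement's English description precedes it below -/
import Mathlib

section
/- For every binary (n,M) code C, the average Hamming distance satisfies d̄(C) ≥ (n+1)/2 − 2^{n−1}/M. -/
open Finset

noncomputable def avgDist (n : ℕ) (C : Finset (Fin n → Bool)) : ℝ :=
  (1 / (C.card : ℝ) ^ 2) * ∑ c ∈ C, ∑ c' ∈ C, (hammingDist c c' : ℝ)

noncomputable def beta (n M : ℕ) : ℝ :=
  sInf {x : ℝ | ∃ C : Finset (Fin n → Bool), C.card = M ∧ avgDist n C = x}

noncomputable def eps (b : Bool) : ℝ := if b then -1 else 1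

lemma orth (n : ℕ) (c c' : Fin n → Bool) :
    ∑ S : Fin n → Bool, ∏ i, (if S i then eps (c i) * eps (c' i) else (1:ℝ))
      = if c = c' then (2:ℝ)^n else 0 := by
  have h1 : ∏ i, ∑ b : Bool, (if b then eps (c i) * eps (c' i) else (1:ℝ))
      = ∑ S ∈ Fintype.piFinset (fun _ : Fin n => (univ : Finset Bool)),
          ∏ i, (if S i then eps (c i) * eps (c' i) else (1:ℝ)) :=
    Finset.prod_univ_sum _ _
  rw [Fintype.piFinset_univ] at h1
  rw [← h1]
  have h2 : ∀ i, ∑ b : Bool, (if b then eps (c i) * eps (c' i) else (1:ℝ))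
      = if c i = c' i then 2 else 0 := by
    intro i
    rw [Fintype.sum_bool]
    cases h : c i <;> cases h' : c' i <;> norm_num [eps]
  simp_rw [h2]
  by_cases hcc : c = c'
  · subst hcc; simp
  · obtain ⟨i, hi⟩ : ∃ i, c i ≠ c' i := Function.ne_iff.mp hcc
    rw [if_neg hcc]
    exact Finset.prod_eq_zero (mem_univ i) (if_neg hi)

lemma parseval (n : ℕ) (C : Finset (Fin n → Bool)) :
    ∑ S : Fin n → Bool, (∑ c ∈ C, ∏ i, (if S i then eps (c i) else (1:ℝ)))^2
      = 2^n * C.card := by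
  have key : ∀ (S : Fin n → Bool) (c c' : Fin n → Bool),
      (∏ i, (if S i then eps (c i) else (1:ℝ))) * (∏ i, (if S i then eps (c' i) else (1:ℝ)))
        = ∏ i, (if S i then eps (c i) * eps (c' i) else (1:ℝ)) := by
    intro S c c'
    rw [← Finset.prod_mul_distrib]
    refine Finset.prod_congr rfl fun i _ => ?_
    by_cases h : S i <;> simp [h]
  simp_rw [sq, Finset.sum_mul_sum, key]
  rw [Finset.sum_comm]
  have step : ∀ c ∈ C, ∑ S : Fin n → Bool, ∑ c' ∈ C,
      ∏ i, (if S i then eps (c i) * eps (c' i) else (1:ℝ)) = 2^n := by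
    intro c hc
    rw [Finset.sum_comm]
    simp_rw [orth]
    rw [Finset.sum_ite_eq C c, if_pos hc]
  rw [Finset.sum_congr rfl step]
  simp [mul_comm]

lemma fourier_bound (n : ℕ) (C : Finset (Fin n → Bool)) :
    (C.card:ℝ)^2 + ∑ i : Fin n, (∑ c ∈ C, eps (c i))^2 ≤ 2^n * C.card := by
  set F : (Fin n → Bool) → ℝ :=
    fun S => ∑ c ∈ C, ∏ i, (if S i then eps (c i) else (1:ℝ)) with hF
  set δ : Fin n → (Fin n → Bool) := fun i j => decide (j = i) with hδ
  have hF0 : F (fun _ => false) = C.card := by simp [hF]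
  have hFδ : ∀ i, F (δ i) = ∑ c ∈ C, eps (c i) := by
    intro i
    simp only [hF, hδ]
    refine Finset.sum_congr rfl fun c _ => ?_
    simp only [decide_eq_true_eq]
    rw [Finset.prod_ite_eq' univ i (fun j => eps (c j)), if_pos (mem_univ i)]
  have hinj : Function.Injective δ := by
    intro i i' h
    have := congrFun h i
    simpa [hδ] using this
  have hnotmem : (fun _ => false) ∉ Finset.image δ univ := by
    simp only [Finset.mem_image, not_exists]
    rintro i ⟨-, h⟩
    have := congrFun h i
    simp [hδ] at this
  have hsub : insert (fun _ => false) (Finset.image δ univ) ⊆ (univ : Finset (Fin n → Bool)) :=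
    Finset.subset_univ _
  calc (C.card:ℝ)^2 + ∑ i : Fin n, (∑ c ∈ C, eps (c i))^2
      = ∑ S ∈ insert (fun _ => false) (Finset.image δ univ), (F S)^2 := by
        rw [Finset.sum_insert hnotmem, hF0,
          Finset.sum_image (fun i _ j _ h => hinj h)]
        simp_rw [hFδ]
    _ ≤ ∑ S : Fin n → Bool, (F S)^2 :=
        Finset.sum_le_sum_of_subset_of_nonneg hsub (fun _ _ _ => sq_nonneg _)
    _ = 2^n * C.card := parseval n C

lemma hamming_eps (n : ℕ) (c c' : Fin n → Bool) :
    (hammingDist c c' : ℝ) = ∑ i, (1 - eps (c i) * eps (c' i))/2 := by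
  rw [hammingDist, Finset.card_filter]
  push_cast
  refine Finset.sum_congr rfl fun i _ => ?_
  cases h : c i <;> cases h' : c' i <;> norm_num [eps]

lemma sum_hamming (n : ℕ) (C : Finset (Fin n → Bool)) :
    ∑ c ∈ C, ∑ c' ∈ C, (hammingDist c c' : ℝ)
      = ((n:ℝ) * (C.card:ℝ)^2 - ∑ i : Fin n, (∑ c ∈ C, eps (c i))^2) / 2 := by
  have swap : ∑ c ∈ C, ∑ c' ∈ C, ∑ i : Fin n, (1 - eps (c i) * eps (c' i))/2
      = ∑ i : Fin n, ∑ c ∈ C, ∑ c' ∈ C, (1 - eps (c i) * eps (c' i))/2 := by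
    calc ∑ c ∈ C, ∑ c' ∈ C, ∑ i : Fin n, (1 - eps (c i) * eps (c' i))/2
        = ∑ c ∈ C, ∑ i : Fin n, ∑ c' ∈ C, (1 - eps (c i) * eps (c' i))/2 :=
          Finset.sum_congr rfl fun c _ => Finset.sum_comm
      _ = ∑ i : Fin n, ∑ c ∈ C, ∑ c' ∈ C, (1 - eps (c i) * eps (c' i))/2 :=
          Finset.sum_comm
  simp_rw [hamming_eps]
  rw [swap]
  have inner : ∀ i : Fin n, ∑ c ∈ C, ∑ c' ∈ C, (1 - eps (c i) * eps (c' i))/2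
      = ((C.card:ℝ)^2 - (∑ c ∈ C, eps (c i))^2)/2 := by
    intro i
    have h1 : ∀ c : Fin n → Bool, ∑ c' ∈ C, (1 - eps (c i) * eps (c' i))
        = (C.card:ℝ) - eps (c i) * ∑ c' ∈ C, eps (c' i) := by
      intro c
      rw [Finset.sum_sub_distrib, Finset.mul_sum]
      simp
    have : ∑ c ∈ C, ∑ c' ∈ C, (1 - eps (c i) * eps (c' i))
        = (C.card:ℝ)^2 - (∑ c ∈ C, eps (c i))^2 := by
      rw [Finset.sum_congr rfl fun c _ => h1 c, Finset.sum_sub_distrib,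
        ← Finset.sum_mul]
      simp [sq, mul_comm]
    simp only [← Finset.sum_div]
    rw [this]
  rw [Finset.sum_congr rfl fun i _ => inner i]
  rw [← Finset.sum_div, Finset.sum_sub_distrib]
  simp [Finset.sum_const, Finset.card_univ, mul_comm]

theorem stmt_1 (n : ℕ) (C : Finset (Fin n → Bool)) (hC : C.Nonempty) :
    avgDist n C ≥ ((n : ℝ) + 1) / 2 - (2 : ℝ) ^ (n - 1) / (C.card : ℝ) := by
  have hM : (0:ℝ) < (C.card : ℝ) := by exact_mod_cast hC.card_pos
  have hb := fourier_bound n C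
  rw [avgDist, sum_hamming]
  set M : ℝ := (C.card : ℝ) with hMdef
  set X : ℝ := ∑ i : Fin n, (∑ c ∈ C, eps (c i))^2 with hX
  have hXle : X ≤ 2^n * M - M^2 := by linarith
  have hpow : (2:ℝ)^n / 2 ≤ (2:ℝ)^(n-1) := by
    cases n with
    | zero => norm_num
    | succ k => norm_num [pow_succ]
  rw [ge_iff_le, ← sub_nonneg]
  have expand : (1/M^2) * (((n:ℝ)*M^2 - X)/2) - (((n:ℝ)+1)/2 - 2^(n-1)/M)
      = ((2^n*M - M^2 - X) / (2*M^2)) + ((2:ℝ)^(n-1) - 2^n/2)/M := by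
    field_simp
    ring
  rw [expand]
  have h1 : (0:ℝ) ≤ (2^n*M - M^2 - X) / (2*M^2) :=
    div_nonneg (by linarith) (by positivity)
  have h2 : (0:ℝ) ≤ ((2:ℝ)^(n-1) - 2^n/2)/M :=
    div_nonneg (by linarith) hM.le
  linarith
end

section
/- For every binary (n,M) code C, the average Hamming distance satisfies d̄(C) ≥ 3/2 − 2/M. -/
open Finset

/-!
Split the code by the parity of the weight. Two distinct words of equal parity are at distance
at least 2, two distinct words at distance at least 1, so summing over all pairs gives
`∑ d(c,c') ≥ M² + (a² + b²) - 2M`, where `a + b = M` are the sizes of the two parity classes;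
and `a² + b² ≥ M²/2`.
-/

theorem sq_card_le_card_mul_sum_card_fiber {α β : Type*} [DecidableEq β] {s : Finset α}
    {t : Finset β} {f : α → β} (hf : (s : Set α).MapsTo f t) :
    #s ^ 2 ≤ #t * ∑ a ∈ s, #{b ∈ s | f b = f a} := by
  have hfiber : ∑ a ∈ s, #{b ∈ s | f b = f a} = ∑ y ∈ t, #{a ∈ s | f a = y} ^ 2 := by
    rw [← sum_fiberwise_of_maps_to hf]
    refine sum_congr rfl fun y _ => ?_
    rw [sum_congr rfl fun a ha => by rw [(mem_filter.mp ha).2], sum_const, smul_eq_mul, sq]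
  rw [hfiber, card_eq_sum_card_fiberwise hf]
  exact sq_sum_le_card_mul_sum_sq

section Binary

variable {ι : Type*} [Fintype ι]

theorem hammingDist_cast_zmod_two (x y z : ι → Bool) :
    (hammingDist x z : ZMod 2) = hammingDist x y + hammingDist y z := by
  simp only [hammingDist, natCast_card_filter, ← sum_add_distrib]
  refine sum_congr rfl fun i _ => ?_
  cases x i <;> cases y i <;> cases z i <;> decide

theorem two_le_hammingDist_of_cast_eq {x y : ι → Bool} (z : ι → Bool) (hxy : x ≠ y)
    (h : (hammingDist x z : ZMod 2) = hammingDist y z) : 2 ≤ hammingDist x y := by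
  have heven : (hammingDist x y : ZMod 2) = 0 := by
    rw [hammingDist_cast_zmod_two x z y, h, hammingDist_comm z y, CharTwo.add_self_eq_zero]
  have hpos := hammingDist_pos.mpr hxy
  have := (ZMod.natCast_eq_zero_iff _ 2).mp heven
  omega

theorem one_add_ite_le_hammingDist_add_ite (z x y : ι → Bool) :
    1 + (if (hammingDist y z : ZMod 2) = hammingDist x z then 1 else 0) ≤
      hammingDist x y + if x = y then 2 else 0 := by
  by_cases hxy : x = y
  · subst hxy; simp
  · rw [if_neg hxy, add_zero]
    split_ifs with h
    · exact two_le_hammingDist_of_cast_eq z hxy h.symm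
    · exact hammingDist_pos.mpr hxy

theorem three_mul_sq_card_le (C : Finset (ι → Bool)) :
    3 * #C ^ 2 ≤ 2 * (∑ x ∈ C, ∑ y ∈ C, hammingDist x y + 2 * #C) := by
  let parity : (ι → Bool) → ZMod 2 := fun x => hammingDist x fun _ => false
  have hclasses : #C ^ 2 ≤ 2 * ∑ x ∈ C, #{y ∈ C | parity y = parity x} := by
    simpa using sq_card_le_card_mul_sum_card_fiber (t := univ) (f := parity) (by simp)
  have hpairs : ∑ x ∈ C, ∑ y ∈ C, (1 + if parity y = parity x then 1 else 0) ≤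
      ∑ x ∈ C, ∑ y ∈ C, (hammingDist x y + if x = y then 2 else 0) :=
    sum_le_sum fun x _ => sum_le_sum fun y _ => one_add_ite_le_hammingDist_add_ite _ x y
  simp only [sum_add_distrib, sum_const, smul_eq_mul, mul_one, ← card_filter, sum_ite_eq,
    sum_ite_mem, inter_self, ← sq] at hpairs
  omega

end Binary

theorem stmt_3 (n : ℕ) (C : Finset (Fin n → Bool)) (hC : C.Nonempty) :
    avgDist n C ≥ 3 / 2 - 2 / (C.card : ℝ) := by
  have hM : (0 : ℝ) < #C := by exact_mod_cast hC.card_pos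
  have hbound : (3 * #C ^ 2 : ℝ) ≤ 2 * (∑ x ∈ C, ∑ y ∈ C, (hammingDist x y : ℝ) + 2 * #C) := by
    exact_mod_cast three_mul_sq_card_le C
  rw [avgDist, ge_iff_le, one_div_mul_eq_div, le_div_iff₀ (by positivity)]
  calc (3 / 2 - 2 / (#C : ℝ)) * #C ^ 2 = (3 * #C ^ 2 - 4 * #C) / 2 := by field_simp; ring
    _ ≤ _ := by linarith
end

section
/- For all integers n ≥ 1 and 2 ≤ M ≤ 2^n − 1, the minimum average Hamming distance satisfies β(n, M+1) ≥ (M²/(M²−1))·β(n, M). -/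
open Finset

section PairSum

variable {α R : Type*} [DecidableEq α] [CommRing R] {d : α → α → R}

theorem sum_sum_erase_self (hsymm : ∀ a b, d a b = d b a) (hdiag : ∀ a, d a a = 0)
    {C : Finset α} {x : α} (hx : x ∈ C) :
    ∑ c ∈ C.erase x, ∑ c' ∈ C.erase x, d c c' =
      ∑ c ∈ C, ∑ c' ∈ C, d c c' - 2 * ∑ c ∈ C, d x c := by
  simp only [sum_erase_eq_sub hx, sum_sub_distrib, hdiag, sub_zero]
  rw [sum_congr rfl fun c _ => hsymm c x]
  ring

/-- Deleting each point in turn counts every pair of distinct points `#C - 2` times. -/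
theorem sum_sum_sum_erase (hsymm : ∀ a b, d a b = d b a) (hdiag : ∀ a, d a a = 0)
    (C : Finset α) :
    ∑ x ∈ C, ∑ c ∈ C.erase x, ∑ c' ∈ C.erase x, d c c' =
      ((#C : R) - 2) * ∑ c ∈ C, ∑ c' ∈ C, d c c' := by
  rw [sum_congr rfl fun x hx => sum_sum_erase_self hsymm hdiag hx, sum_sub_distrib,
    ← mul_sum, sum_const, nsmul_eq_mul]
  ring

end PairSum

theorem avgDist_nonneg (n : ℕ) (C : Finset (Fin n → Bool)) : 0 ≤ avgDist n C := by
  unfold avgDist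
  positivity

theorem card_sq_mul_avgDist {n : ℕ} (C : Finset (Fin n → Bool)) :
    (#C : ℝ) ^ 2 * avgDist n C = ∑ c ∈ C, ∑ c' ∈ C, (hammingDist c c' : ℝ) := by
  obtain rfl | hC := C.eq_empty_or_nonempty
  · simp
  have : (#C : ℝ) ≠ 0 := by exact_mod_cast hC.card_ne_zero
  rw [avgDist, ← mul_assoc, mul_one_div_cancel (pow_ne_zero 2 this), one_mul]

theorem beta_le_avgDist {n : ℕ} (C : Finset (Fin n → Bool)) : beta n #C ≤ avgDist n C :=
  csInf_le ⟨0, fun _ ⟨C', _, hC'⟩ => hC' ▸ avgDist_nonneg n C'⟩ ⟨C, rfl, rfl⟩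

theorem le_beta {n M : ℕ} {b : ℝ} (hM : M ≤ 2 ^ n)
    (h : ∀ C : Finset (Fin n → Bool), #C = M → b ≤ avgDist n C) : b ≤ beta n M := by
  obtain ⟨C, -, hC⟩ := exists_subset_card_eq (s := (univ : Finset (Fin n → Bool)))
    (by simpa using hM)
  exact le_csInf ⟨_, C, hC, rfl⟩ fun _ ⟨C', hC', hx⟩ => hx ▸ h C' hC'

/-- Averaging `β(n, M) ≤ d̄(C \ {x})` over the `M + 1` points `x` of `C`. -/
theorem sq_mul_beta_le_avgDist {n M : ℕ} {C : Finset (Fin n → Bool)} (hC : #C = M + 1) :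
    (M : ℝ) ^ 2 * beta n M ≤ ((M : ℝ) ^ 2 - 1) * avgDist n C := by
  have herase : ∀ x ∈ C, (M : ℝ) ^ 2 * beta n M ≤
      ∑ c ∈ C.erase x, ∑ c' ∈ C.erase x, (hammingDist c c' : ℝ) := by
    intro x hx
    have hcard : #(C.erase x) = M := by rw [card_erase_of_mem hx, hC]; rfl
    rw [← card_sq_mul_avgDist, hcard, ← hcard]
    gcongr
    exact beta_le_avgDist _
  have hsum := sum_le_sum herase
  rw [sum_sum_sum_erase (fun a b => by rw [hammingDist_comm]) (fun a => by simp),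
    ← card_sq_mul_avgDist, sum_const, nsmul_eq_mul, hC] at hsum
  push_cast at hsum
  have hpos : (0 : ℝ) < M + 1 := by positivity
  nlinarith

theorem stmt_4_general (n M : ℕ) (hM1 : 2 ≤ M) (hM2 : M ≤ 2 ^ n - 1) :
    beta n (M + 1) ≥ ((M : ℝ) ^ 2 / ((M : ℝ) ^ 2 - 1)) * beta n M := by
  have hM : (0 : ℝ) < (M : ℝ) ^ 2 - 1 := by
    have : (2 : ℝ) ≤ M := by exact_mod_cast hM1
    nlinarith
  refine le_beta (by have := Nat.one_le_two_pow (n := n); omega) fun C hC => ?_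
  rw [div_mul_eq_mul_div, div_le_iff₀ hM, mul_comm (avgDist n C)]
  exact sq_mul_beta_le_avgDist hC

theorem stmt_4 (n M : ℕ) (hn : 1 ≤ n) (hM1 : 2 ≤ M) (hM2 : M ≤ 2 ^ n - 1) :
    beta n (M + 1) ≥ ((M : ℝ) ^ 2 / ((M : ℝ) ^ 2 - 1)) * beta n M :=
  stmt_4_general n M hM1 hM2
end

section
/- For every binary (n,M) code C, each dual distance distribution coefficient B_k = (1/M)·Σ_{i=0}^n K_k(i)·A_i is nonnegative, for 0 ≤ k ≤ n. -/
open Finset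

def kraw (n k i : ℕ) : ℤ :=
  ∑ j ∈ Finset.range (k + 1), (-1) ^ j * (i.choose j) * ((n - i).choose (k - j))

noncomputable def distDistr (n : ℕ) (C : Finset (Fin n → Bool)) (i : ℕ) : ℝ :=
  (((C ×ˢ C).filter (fun p => hammingDist p.1 p.2 = i)).card : ℝ) / (C.card : ℝ)

noncomputable def dualDistDistr (n : ℕ) (C : Finset (Fin n → Bool)) (k : ℕ) : ℝ :=
  (1 / (C.card : ℝ)) * ∑ i ∈ Finset.range (n + 1), (kraw n k i : ℝ) * distDistr n C i

/-! Auxiliary development for Delsarte's inequality. -/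

noncomputable def chi (n : ℕ) (S : Finset (Fin n)) (x : Fin n → Bool) : ℝ :=
  ∏ i ∈ S, (if x i then (-1 : ℝ) else 1)

lemma chi_mul (n : ℕ) (S : Finset (Fin n)) (x y : Fin n → Bool) :
    chi n S x * chi n S y =
      (-1 : ℝ) ^ (S ∩ Finset.univ.filter (fun i => x i ≠ y i)).card := by
  unfold chi
  rw [← Finset.prod_mul_distrib]
  have h : ∀ i ∈ S, (if x i then (-1:ℝ) else 1) * (if y i then (-1:ℝ) else 1)
      = if x i ≠ y i then (-1:ℝ) else 1 := by
    intro i _; cases hx : x i <;> cases hy : y i <;> simp [hx, hy]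
  rw [Finset.prod_congr rfl h, Finset.prod_ite, Finset.prod_const, Finset.prod_const,
    one_pow, mul_one]
  have : S.filter (fun i => x i ≠ y i) = S ∩ Finset.univ.filter (fun i => x i ≠ y i) := by
    ext i; simp
  rw [this]

lemma card_filter_inter (n k : ℕ) (D A : Finset (Fin n)) (hA : A ⊆ D) :
    (((Finset.powersetCard k (Finset.univ : Finset (Fin n))).filter
        (fun S => S ∩ D = A)).card)
      = if A.card ≤ k then ((n - D.card).choose (k - A.card)) else 0 := by
  split_ifs with h
  · have := Finset.card_bij'
      (i := fun (S : Finset (Fin n)) (_ : S ∈ (Finset.powersetCard k Finset.univ).filter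
          (fun S => S ∩ D = A)) => S \ D)
      (j := fun (B : Finset (Fin n)) (_ : B ∈ Finset.powersetCard (k - A.card) Dᶜ) => A ∪ B)
      (hi := ?_) (hj := ?_) (left_inv := ?_) (right_inv := ?_)
    · rw [this, Finset.card_powersetCard, Finset.card_compl, Fintype.card_fin]
    · intro S hS
      show S \ D ∈ Finset.powersetCard (k - A.card) Dᶜ
      simp only [Finset.mem_filter, Finset.mem_powersetCard] at hS
      obtain ⟨⟨_, hcard⟩, hSD⟩ := hS
      rw [Finset.mem_powersetCard]
      constructor
      · intro i hi
        simp only [Finset.mem_sdiff] at hi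
        simp [hi.2]
      · have := Finset.card_inter_add_card_sdiff S D
        rw [hSD, hcard] at this
        omega
    · intro B hB
      show A ∪ B ∈ _
      rw [Finset.mem_powersetCard] at hB
      obtain ⟨hBsub, hBcard⟩ := hB
      have hdisj : Disjoint A B := by
        refine Finset.disjoint_left.2 fun i hiA hiB => ?_
        have := hBsub hiB
        simp only [Finset.mem_compl] at this
        exact this (hA hiA)
      simp only [Finset.mem_filter, Finset.mem_powersetCard]
      refine ⟨⟨Finset.subset_univ _, ?_⟩, ?_⟩
      · rw [Finset.card_union_of_disjoint hdisj, hBcard]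
        omega
      · ext i
        simp only [Finset.mem_inter, Finset.mem_union]
        constructor
        · rintro ⟨hi | hi, hiD⟩
          · exact hi
          · exact absurd hiD (by simpa using hBsub hi)
        · intro hi
          exact ⟨Or.inl hi, hA hi⟩
    · intro S hS
      show A ∪ (S \ D) = S
      simp only [Finset.mem_filter] at hS
      rw [← hS.2]
      exact sup_inf_sdiff S D
    · intro B hB
      show (A ∪ B) \ D = B
      rw [Finset.mem_powersetCard] at hB
      ext i
      simp only [Finset.mem_sdiff, Finset.mem_union]
      constructor
      · rintro ⟨hi | hi, hiD⟩
        · exact absurd (hA hi) hiD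
        · exact hi
      · intro hi
        have := hB.1 hi
        simp only [Finset.mem_compl] at this
        exact ⟨Or.inr hi, this⟩
  · rw [Finset.card_eq_zero, Finset.filter_eq_empty_iff]
    intro S hS hSD
    rw [Finset.mem_powersetCard] at hS
    have : A.card ≤ S.card := by
      rw [← hSD]; exact Finset.card_le_card (Finset.inter_subset_left)
    omega

lemma sum_sign_inter (n k : ℕ) (hk : k ≤ n) (D : Finset (Fin n)) :
    ∑ S ∈ Finset.powersetCard k (Finset.univ : Finset (Fin n)),
        (-1 : ℝ) ^ ((S ∩ D).card) = (kraw n k D.card : ℝ) := by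
  have hmaps : ∀ S ∈ Finset.powersetCard k (Finset.univ : Finset (Fin n)),
      S ∩ D ∈ D.powerset := fun S _ => Finset.mem_powerset.2 Finset.inter_subset_right
  rw [← Finset.sum_fiberwise_of_maps_to hmaps]
  have step1 : ∀ A ∈ D.powerset,
      (∑ S ∈ (Finset.powersetCard k (Finset.univ : Finset (Fin n))).filter
          (fun S => S ∩ D = A), (-1 : ℝ) ^ ((S ∩ D).card))
        = ((if A.card ≤ k then ((n - D.card).choose (k - A.card)) else 0 : ℕ) : ℝ)
            * (-1 : ℝ) ^ A.card := by
    intro A hA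
    rw [Finset.mem_powerset] at hA
    have : ∀ S ∈ (Finset.powersetCard k (Finset.univ : Finset (Fin n))).filter
        (fun S => S ∩ D = A), (-1 : ℝ) ^ ((S ∩ D).card) = (-1 : ℝ) ^ A.card := by
      intro S hS
      rw [Finset.mem_filter] at hS
      rw [hS.2]
    rw [Finset.sum_congr rfl this, Finset.sum_const, card_filter_inter n k D A hA,
      nsmul_eq_mul]
  rw [Finset.sum_congr rfl step1, Finset.sum_powerset]
  have step2 : ∀ j ∈ Finset.range (D.card + 1),
      (∑ A ∈ Finset.powersetCard j D,
        ((if A.card ≤ k then ((n - D.card).choose (k - A.card)) else 0 : ℕ) : ℝ)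
            * (-1 : ℝ) ^ A.card)
      = (D.card.choose j : ℝ) *
          (((if j ≤ k then ((n - D.card).choose (k - j)) else 0 : ℕ) : ℝ) * (-1 : ℝ) ^ j) := by
    intro j _
    have : ∀ A ∈ Finset.powersetCard j D,
        ((if A.card ≤ k then ((n - D.card).choose (k - A.card)) else 0 : ℕ) : ℝ)
            * (-1 : ℝ) ^ A.card
          = ((if j ≤ k then ((n - D.card).choose (k - j)) else 0 : ℕ) : ℝ) * (-1 : ℝ) ^ j := by
      intro A hA
      rw [(Finset.mem_powersetCard.1 hA).2]
    rw [Finset.sum_congr rfl this, Finset.sum_const, Finset.card_powersetCard, nsmul_eq_mul]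
  rw [Finset.sum_congr rfl step2]
  -- now pure arithmetic with ranges
  have hD : D.card ≤ n := by
    simpa using Finset.card_le_card (Finset.subset_univ D)
  unfold kraw
  push_cast [Nat.cast_ite]
  set d := D.card with hd
  have lhs_eq : ∑ j ∈ Finset.range (d + 1), (d.choose j : ℝ) *
        ((if j ≤ k then (((n - d).choose (k - j) : ℕ) : ℝ) else 0) * (-1 : ℝ) ^ j)
      = ∑ j ∈ Finset.range (n + 1), (d.choose j : ℝ) *
        ((if j ≤ k then (((n - d).choose (k - j) : ℕ) : ℝ) else 0) * (-1 : ℝ) ^ j) := by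
    apply Finset.sum_subset
    · intro j hj
      rw [Finset.mem_range] at hj ⊢
      omega
    · intro j _ hj
      rw [Finset.mem_range, not_lt] at hj
      have : d.choose j = 0 := Nat.choose_eq_zero_of_lt (by omega)
      simp [this]
  have rhs_eq : ∑ j ∈ Finset.range (n + 1), (d.choose j : ℝ) *
        ((if j ≤ k then (((n - d).choose (k - j) : ℕ) : ℝ) else 0) * (-1 : ℝ) ^ j)
      = ∑ j ∈ Finset.range (k + 1),
        (-1 : ℝ) ^ j * (d.choose j : ℝ) * (((n - d).choose (k - j) : ℕ) : ℝ) := by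
    rw [← Finset.sum_subset (s₁ := Finset.range (k + 1))
        (by intro j hj; rw [Finset.mem_range] at hj ⊢; omega)
        (by intro j _ hj
            rw [Finset.mem_range, not_lt] at hj
            rw [if_neg (by omega)]
            ring)]
    apply Finset.sum_congr rfl
    intro j hj
    rw [Finset.mem_range] at hj
    rw [if_pos (by omega : j ≤ k)]
    ring
  rw [lhs_eq, rhs_eq]

lemma kraw_pair_sum_nonneg (n k : ℕ) (hk : k ≤ n) (C : Finset (Fin n → Bool)) :
    0 ≤ ∑ p ∈ C ×ˢ C, (kraw n k (hammingDist p.1 p.2) : ℝ) := by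
  have key : ∀ p ∈ C ×ˢ C, (kraw n k (hammingDist p.1 p.2) : ℝ)
      = ∑ S ∈ Finset.powersetCard k (Finset.univ : Finset (Fin n)),
          chi n S p.1 * chi n S p.2 := by
    intro p _
    have hd : hammingDist p.1 p.2
        = (Finset.univ.filter (fun i => p.1 i ≠ p.2 i)).card := rfl
    rw [hd, ← sum_sign_inter n k hk]
    exact Finset.sum_congr rfl fun S _ => (chi_mul n S p.1 p.2).symm
  rw [Finset.sum_congr rfl key, Finset.sum_comm]
  apply Finset.sum_nonneg
  intro S _
  have : ∑ p ∈ C ×ˢ C, chi n S p.1 * chi n S p.2 = (∑ c ∈ C, chi n S c) ^ 2 := by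
    rw [Finset.sum_product, sq, Finset.sum_mul_sum]
  rw [this]
  exact sq_nonneg _

theorem stmt_8 (n : ℕ) (C : Finset (Fin n → Bool)) (hC : C.Nonempty)
    (k : ℕ) (hk : k ≤ n) : 0 ≤ dualDistDistr n C k := by
  have key : ∑ i ∈ Finset.range (n + 1), (kraw n k i : ℝ)
        * (((C ×ˢ C).filter (fun p => hammingDist p.1 p.2 = i)).card : ℝ)
      = ∑ p ∈ C ×ˢ C, (kraw n k (hammingDist p.1 p.2) : ℝ) := by
    have hmaps : ∀ p ∈ C ×ˢ C, hammingDist p.1 p.2 ∈ Finset.range (n + 1) := by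
      intro p _
      rw [Finset.mem_range]
      have := hammingDist_le_card_fintype (x := p.1) (y := p.2)
      simpa using Nat.lt_succ_of_le (by simpa using this)
    rw [← Finset.sum_fiberwise_of_maps_to hmaps
      (fun p => (kraw n k (hammingDist p.1 p.2) : ℝ))]
    apply Finset.sum_congr rfl
    intro i _
    rw [Finset.sum_congr rfl (fun p hp => by
      rw [(Finset.mem_filter.1 hp).2]
      : ∀ p ∈ (C ×ˢ C).filter (fun p => hammingDist p.1 p.2 = i),
          (kraw n k (hammingDist p.1 p.2) : ℝ) = (kraw n k i : ℝ)),
      Finset.sum_const, nsmul_eq_mul]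
    ring
  have heq : dualDistDistr n C k = (1 / (C.card : ℝ)) ^ 2
      * ∑ p ∈ C ×ˢ C, (kraw n k (hammingDist p.1 p.2) : ℝ) := by
    unfold dualDistDistr distDistr
    rw [← key, Finset.mul_sum, Finset.mul_sum]
    apply Finset.sum_congr rfl
    intro i _
    ring
  rw [heq]
  exact mul_nonneg (sq_nonneg _) (kraw_pair_sum_nonneg n k hk C)
end

section
/- If n is an even positive integer and i is an integer with 2 ≤ i ≤ n/2, then |K^n_i(n/2 + 1)| < C(n, ⌊i/2⌋). -/
/-!
At `x = m + 1` with `n = 2m`, the generating function `(1 - X)^x (1 + X)^(n - x)` of the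
Krawtchouk values `K^n_·(x)` equals `(1 - X)^2 (1 - X^2)^(m - 1)`. Its coefficients are second
differences of the coefficients `±C(m - 1, t)` of `(1 - X^2)^(m - 1)`, which vanish in odd degree.
Hence `|K^n_i(x)| ≤ C(m - 1, t) + C(m - 1, t - 1) = C(m, t)` for `i = 2t`, and
`|K^n_i(x)| = 2 C(m - 1, t) < 2 C(m, t)` for `i = 2t + 1`. Both are below `C(2m, t)`, since the
two extreme terms of Vandermonde's sum for `C(m + m, t)` already give `2 C(m, t)`.
-/

open Finset

open Polynomial

theorem coeff_one_sub_X_pow (R : Type*) [CommRing R] (a k : ℕ) :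
    ((1 - X : R[X]) ^ a).coeff k = (-1) ^ k * a.choose k := by
  have h : ∀ m, (-X : R[X]) ^ m * 1 ^ (a - m) * (a.choose m : R[X]) =
      C ((-1 : R) ^ m * a.choose m) * X ^ m := by
    intro m
    rw [neg_pow, one_pow, mul_one, C_mul, C_pow, C_neg, C_1, ← map_natCast C]
    ring
  rw [sub_eq_neg_add, add_pow, finsetSum_coeff]
  simp only [h, coeff_C_mul_X_pow, sum_ite_eq, mem_range]
  split_ifs with hk
  · rfl
  · rw [Nat.choose_eq_zero_of_lt (by omega), Nat.cast_zero, mul_zero]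

theorem one_sub_X_sq_pow_eq_expand (R : Type*) [CommRing R] (a : ℕ) :
    (1 - X ^ 2 : R[X]) ^ a = expand R 2 ((1 - X) ^ a) := by
  simp

theorem coeff_one_sub_X_sq_pow_two_mul (R : Type*) [CommRing R] (a t : ℕ) :
    ((1 - X ^ 2 : R[X]) ^ a).coeff (2 * t) = (-1) ^ t * a.choose t := by
  rw [one_sub_X_sq_pow_eq_expand, coeff_expand_mul' two_pos, coeff_one_sub_X_pow]

theorem coeff_one_sub_X_sq_pow_two_mul_add_one (R : Type*) [CommRing R] (a t : ℕ) :
    ((1 - X ^ 2 : R[X]) ^ a).coeff (2 * t + 1) = 0 := by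
  rw [one_sub_X_sq_pow_eq_expand, coeff_expand two_pos, if_neg (by omega)]

theorem coeff_one_sub_X_sq_mul (R : Type*) [CommRing R] (p : R[X]) (j : ℕ) :
    ((1 - X) ^ 2 * p).coeff (j + 2) = p.coeff (j + 2) - 2 * p.coeff (j + 1) + p.coeff j := by
  have h : (1 - X) ^ 2 * p = p - C 2 * (X * p) + X ^ 2 * p := by
    rw [C_ofNat]; ring
  rw [h, coeff_add, coeff_sub, coeff_C_mul, coeff_X_mul, coeff_X_pow_mul]

theorem kraw_eq_coeff (n k x : ℕ) :
    kraw n k x = ((1 - X) ^ x * (1 + X) ^ (n - x) : ℤ[X]).coeff k := by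
  rw [kraw, coeff_mul, Nat.sum_antidiagonal_eq_sum_range_succ_mk]
  refine sum_congr rfl fun j _ => ?_
  rw [coeff_one_sub_X_pow, coeff_one_add_X_pow]

theorem kraw_two_mul_add_two (k i : ℕ) :
    kraw (2 * k + 2) i (k + 2) = ((1 - X) ^ 2 * (1 - X ^ 2) ^ k : ℤ[X]).coeff i := by
  rw [kraw_eq_coeff, show 2 * k + 2 - (k + 2) = k by omega,
    show (1 - X ^ 2 : ℤ[X]) = (1 - X) * (1 + X) by ring, mul_pow]
  congr 1
  ring

theorem kraw_two_mul_add_two_even (k s : ℕ) :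
    kraw (2 * k + 2) (2 * s + 2) (k + 2) = (-1) ^ (s + 1) * (k.choose (s + 1) - k.choose s) := by
  rw [kraw_two_mul_add_two, coeff_one_sub_X_sq_mul, show 2 * s + 2 = 2 * (s + 1) by ring,
    coeff_one_sub_X_sq_pow_two_mul, coeff_one_sub_X_sq_pow_two_mul_add_one,
    coeff_one_sub_X_sq_pow_two_mul]
  ring

theorem kraw_two_mul_add_two_odd (k s : ℕ) :
    kraw (2 * k + 2) (2 * s + 3) (k + 2) = 2 * (-1) ^ s * k.choose (s + 1) := by
  rw [kraw_two_mul_add_two, show 2 * s + 3 = 2 * s + 1 + 2 by ring, coeff_one_sub_X_sq_mul,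
    show 2 * s + 1 + 2 = 2 * (s + 1) + 1 by ring, show 2 * s + 1 + 1 = 2 * (s + 1) by ring,
    coeff_one_sub_X_sq_pow_two_mul_add_one, coeff_one_sub_X_sq_pow_two_mul,
    coeff_one_sub_X_sq_pow_two_mul_add_one]
  ring

theorem abs_kraw_two_mul_add_two_even_le (k s : ℕ) :
    |kraw (2 * k + 2) (2 * s + 2) (k + 2)| ≤ (k + 1).choose (s + 1) := by
  rw [kraw_two_mul_add_two_even, abs_mul, abs_pow, abs_neg, abs_one, one_pow, one_mul,
    Nat.choose_succ_succ', Nat.cast_add, abs_le]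
  constructor <;>
    linarith [(k.choose s).cast_nonneg (α := ℤ), (k.choose (s + 1)).cast_nonneg (α := ℤ)]

theorem abs_kraw_two_mul_add_two_odd (k s : ℕ) :
    |kraw (2 * k + 2) (2 * s + 3) (k + 2)| = 2 * k.choose (s + 1) := by
  rw [kraw_two_mul_add_two_odd, abs_mul, abs_mul, abs_pow, abs_neg, abs_one, one_pow, mul_one,
    abs_two, Nat.abs_cast]

theorem Nat.two_mul_choose_le_choose_two_mul (m : ℕ) {t : ℕ} (ht : 1 ≤ t) :
    2 * m.choose t ≤ (2 * m).choose t := by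
  rw [two_mul, two_mul, Nat.add_choose_eq]
  have hsub : {(t, 0), (0, t)} ⊆ antidiagonal t := by simp [insert_subset_iff]
  have hne : ((t, 0) : ℕ × ℕ) ≠ (0, t) := by simp; omega
  have h := sum_le_sum_of_subset (f := fun ij : ℕ × ℕ => m.choose ij.1 * m.choose ij.2) hsub
  rw [sum_pair hne] at h
  simpa using h

theorem stmt_14_general (n i : ℕ) (he : Even n) (hi1 : 2 ≤ i) (hi2 : i ≤ n / 2) :
    |kraw n i (n / 2 + 1)| < (n.choose (i / 2) : ℤ) := by
  obtain ⟨k, rfl⟩ : ∃ k, n = 2 * k + 2 := ⟨n / 2 - 1, by rcases he; omega⟩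
  obtain ⟨s, rfl | rfl⟩ : ∃ s, i = 2 * s + 2 ∨ i = 2 * s + 3 := ⟨i / 2 - 1, by omega⟩
  all_goals
    rw [show (2 * k + 2) / 2 + 1 = k + 2 by omega, show (2 * s + _) / 2 = s + 1 by omega]
    have hC := Nat.two_mul_choose_le_choose_two_mul (k + 1) (t := s + 1) (by omega)
    rw [show 2 * (k + 1) = 2 * k + 2 by ring] at hC
  · have hpos : 0 < (k + 1).choose (s + 1) := Nat.choose_pos (by omega)
    calc |kraw (2 * k + 2) (2 * s + 2) (k + 2)| ≤ (k + 1).choose (s + 1) :=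
          abs_kraw_two_mul_add_two_even_le k s
      _ < ((2 * k + 2).choose (s + 1) : ℤ) := by exact_mod_cast (by omega)
  · have hlt : k.choose (s + 1) < (k + 1).choose (s + 1) := by
      rw [Nat.choose_succ_succ' k s]
      linarith [Nat.choose_pos (show s ≤ k by omega)]
    rw [abs_kraw_two_mul_add_two_odd]
    exact_mod_cast (by omega)

theorem stmt_14 (n i : ℕ) (hn : 0 < n) (he : Even n) (hi1 : 2 ≤ i) (hi2 : i ≤ n / 2) :
    |kraw n i (n / 2 + 1)| < (n.choose (i / 2) : ℤ) :=
  stmt_14_general n i he hi1 hi2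
end

section
/- Let n be an even integer. For every integer i with 6 ≤ i ≤ n/2, one has (i−3)·C(n,i) / C(n, ⌊i/2⌋) > n(n−1)/(n+2). -/
/-!
Write `j = ⌊i/2⌋`. Pascal's ratio identity twice gives
`C(n,j) (n-j)(n-j-1) = C(n,j+2) (j+1)(j+2)`, and `C(n,·)` increases up to `n/2`, so
`C(n,i)/C(n,j) ≥ (n-j)(n-j-1)/((j+1)(j+2))`. Since `i - 3 ≥ 2j - 3`, it remains to check the
polynomial inequality `(2j-3)(n-j)(n-j-1)(n+2) > n(n-1)(j+1)(j+2)` for `j ≥ 3`, `n ≥ 4j`, which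
becomes a polynomial with positive coefficients after substituting `j = a + 3`, `n = 4a + 12 + b`.
-/

theorem Nat.choose_le_choose_of_le_half {n a b : ℕ} (hab : a ≤ b) (hb : b ≤ n / 2) :
    n.choose a ≤ n.choose b := by
  induction b, hab using Nat.le_induction with
  | base => exact le_rfl
  | succ b _ ih => exact (ih (by omega)).trans (Nat.choose_le_succ_of_lt_half_left (by omega))

theorem Nat.choose_mul_sub_mul_sub_eq (n j : ℕ) :
    n.choose j * (n - j) * (n - (j + 1)) = n.choose (j + 2) * ((j + 1) * (j + 2)) := by
  rw [← Nat.choose_succ_right_eq, mul_right_comm, ← Nat.choose_succ_right_eq]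
  ring

theorem choose_mul_le_choose_mul {n i j : ℕ} (hji : j + 2 ≤ i) (hi : i ≤ n / 2) :
    (n.choose j : ℝ) * (((n : ℝ) - j) * ((n : ℝ) - j - 1)) ≤
      n.choose i * (((j : ℝ) + 1) * ((j : ℝ) + 2)) := by
  have hid : ((n.choose j * (n - j) * (n - (j + 1)) : ℕ) : ℝ) =
      ((n.choose (j + 2) * ((j + 1) * (j + 2)) : ℕ) : ℝ) := by
    rw [Nat.choose_mul_sub_mul_sub_eq]
  push_cast [Nat.cast_sub (show j ≤ n by omega), Nat.cast_sub (show j + 1 ≤ n by omega)] at hid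
  have hmono : (n.choose (j + 2) : ℝ) ≤ n.choose i := by
    exact_mod_cast Nat.choose_le_choose_of_le_half hji hi
  calc (n.choose j : ℝ) * (((n : ℝ) - j) * ((n : ℝ) - j - 1))
      = n.choose (j + 2) * (((j : ℝ) + 1) * ((j : ℝ) + 2)) := by linear_combination hid
    _ ≤ n.choose i * (((j : ℝ) + 1) * ((j : ℝ) + 2)) := by gcongr

theorem polynomial_ineq_of_three_le_of_four_mul_le {n j : ℝ} (hj : 3 ≤ j) (hn : 4 * j ≤ n) :
    n * (n - 1) * ((j + 1) * (j + 2)) < (2 * j - 3) * ((n - j) * (n - j - 1)) * (n + 2) := by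
  obtain ⟨a, ha, rfl⟩ : ∃ a : ℝ, 0 ≤ a ∧ a + 3 = j := ⟨j - 3, by linarith, by ring⟩
  obtain ⟨b, hb, rfl⟩ : ∃ b : ℝ, 0 ≤ b ∧ 4 * a + 12 + b = n := ⟨n - 4 * a - 12, by linarith, by ring⟩
  have hpos : 0 < 384 + 470 * b + 73 * b ^ 2 + 3 * b ^ 3 + 1994 * a + 862 * a * b
      + 83 * a * b ^ 2 + 2 * a * b ^ 3 + 1714 * a ^ 2 + 410 * a ^ 2 * b + 19 * a ^ 2 * b ^ 2
      + 532 * a ^ 3 + 58 * a ^ 3 * b + 56 * a ^ 4 := by positivity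
  linear_combination hpos

theorem stmt_16_general (n i : ℕ) (hi1 : 6 ≤ i) (hi2 : i ≤ n / 2) :
    ((i : ℝ) - 3) * (n.choose i : ℝ) / (n.choose (i / 2) : ℝ) >
      (n : ℝ) * ((n : ℝ) - 1) / ((n : ℝ) + 2) := by
  set j := i / 2
  have hj : (3 : ℝ) ≤ j := by exact_mod_cast (show 3 ≤ j by omega)
  have hji : (2 : ℝ) * j ≤ i := by exact_mod_cast (show 2 * j ≤ i by omega)
  have hin : (2 : ℝ) * i ≤ n := by exact_mod_cast (show 2 * i ≤ n by omega)
  have hratio := choose_mul_le_choose_mul (show j + 2 ≤ i by omega) hi2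
  have hpoly := polynomial_ineq_of_three_le_of_four_mul_le (n := n) hj (by linarith)
  have hCj : (0 : ℝ) < n.choose j := by exact_mod_cast Nat.choose_pos (by omega)
  have hfac : (0 : ℝ) ≤ ((n : ℝ) - j) * ((n : ℝ) - j - 1) := by
    apply mul_nonneg <;> linarith
  have hjpos : (0 : ℝ) < ((j : ℝ) + 1) * ((j : ℝ) + 2) := by positivity
  rw [gt_iff_lt, div_lt_div_iff₀ (by linarith) hCj, ← mul_lt_mul_iff_of_pos_right hjpos]
  calc (n : ℝ) * (n - 1) * n.choose j * ((j + 1) * (j + 2))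
      = n * (n - 1) * ((j + 1) * (j + 2)) * n.choose j := by ring
    _ < (2 * j - 3) * ((n - j) * (n - j - 1)) * (n + 2) * n.choose j := by gcongr
    _ ≤ (i - 3) * ((n - j) * (n - j - 1)) * (n + 2) * n.choose j := by gcongr
    _ = (i - 3) * (n + 2) * (n.choose j * ((n - j) * (n - j - 1))) := by ring
    _ ≤ (i - 3) * (n + 2) * (n.choose i * ((j + 1) * (j + 2))) := by
      gcongr
      exact mul_nonneg (by linarith) (by positivity)
    _ = (i - 3) * n.choose i * (n + 2) * ((j + 1) * (j + 2)) := by ring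

theorem stmt_16 (n i : ℕ) (he : Even n) (hi1 : 6 ≤ i) (hi2 : i ≤ n / 2) :
    ((i : ℝ) - 3) * (n.choose i : ℝ) / (n.choose (i / 2) : ℝ) >
      (n : ℝ) * ((n : ℝ) - 1) / ((n : ℝ) + 2) :=
  stmt_16_general n i hi1 hi2
end

section
/- lim_{n→∞} β(n, 2n) = 5/2, where β(n,M) is the minimum average Hamming distance of a binary code of length n and size M. In particular, for all n, 5/2 − (4n−2)/n² ≥ β(n,2n) ≥ 5/2 − 13/(2n) for n large enough. -/
open Finset

/-!
The distance sum of a code `C` of size `M` is `∑ᵢ 2 wᵢ (M - wᵢ)`, where `wᵢ` is the number of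
words with a one in column `i`.

Upper bound: the code consisting of the zero word, the unit words `eⱼ` and the words `e₀ + eⱼ`
has column weights `n, 2, …, 2`, hence average distance `5/2 - (4n - 2)/n²`.

Lower bound: complementing a column is an isometry, so we may assume `wᵢ ≤ M/2 = n` for all `i`.
At most `n + 1` words have weight at most one, so `S = ∑ wᵢ ≥ 3n - 2`; at most `2^|I|` words
vanish outside a set `I` of columns, so the three heaviest columns satisfy
`w₁ + w₂ + w₃ ≤ S + 8 - 2n`. With `∑ wᵢ² ≤ w₁² + w₂² + w₃ (S - w₁ - w₂)` these constraints force
`∑ᵢ 2 wᵢ (2n - wᵢ) ≥ 10n² - 26n`.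
-/

namespace BinaryCode

variable {ι : Type*}

def colWeight (C : Finset (ι → Bool)) (i : ι) : ℕ := #{c ∈ C | c i}

lemma sum_colWeight (C : Finset (ι → Bool)) (J : Finset ι) :
    ∑ i ∈ J, colWeight C i = ∑ c ∈ C, #{i ∈ J | c i} := by
  simp only [colWeight, card_filter]
  exact sum_comm

/-- With `b = true` and `j = i₀` this is the zero word, so `starCode i₀` consists of the zero word,
the unit words `eⱼ` and the words `e_{i₀} + eⱼ` for `j ≠ i₀`. -/
def starWord [DecidableEq ι] (i₀ : ι) (b : Bool) (j : ι) : ι → Bool :=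
  fun i => decide (i = j) ^^ (b && decide (i = i₀))

lemma starWord_injective [DecidableEq ι] (i₀ : ι) :
    Function.Injective fun p : Bool × ι => starWord i₀ p.1 p.2 := by
  rintro ⟨b, j⟩ ⟨b', j'⟩ h
  have h0 := congrFun h i₀
  have hj := congrFun h j
  have hj' := congrFun h j'
  simp only [starWord] at h0 hj hj'
  cases b <;> cases b' <;> by_cases hj0 : j = i₀ <;> by_cases hj'0 : j' = i₀ <;> simp_all

variable [Fintype ι]

lemma sum_sum_hammingDist_eq (C : Finset (ι → Bool)) :
    ∑ c ∈ C, ∑ c' ∈ C, (hammingDist c c' : ℝ) =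
      ∑ i, 2 * (colWeight C i : ℝ) * (#C - colWeight C i) := by
  set a : (ι → Bool) → ι → ℝ := fun c i => if c i then 1 else 0
  have hdist (c c' : ι → Bool) :
      (hammingDist c c' : ℝ) = ∑ i, (a c i + a c' i - 2 * a c i * a c' i) := by
    rw [hammingDist, card_filter, Nat.cast_sum]
    refine sum_congr rfl fun i _ => ?_
    simp only [a]
    cases c i <;> cases c' i <;> norm_num
  have hweight (i : ι) : ∑ c ∈ C, a c i = colWeight C i := by
    simp [a, colWeight]
  simp_rw [hdist]
  rw [sum_congr rfl fun c _ => sum_comm, sum_comm]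
  refine sum_congr rfl fun i _ => ?_
  simp only [sum_add_distrib, sum_sub_distrib, sum_const, ← mul_sum, ← sum_mul, hweight,
    nsmul_eq_mul]
  ring

lemma exists_colWeight_le_half (C : Finset (ι → Bool)) :
    ∃ D : Finset (ι → Bool), #D = #C ∧
      ∑ c ∈ D, ∑ c' ∈ D, hammingDist c c' = ∑ c ∈ C, ∑ c' ∈ C, hammingDist c c' ∧
      ∀ i, 2 * colWeight D i ≤ #D := by
  classical
  set b : ι → Bool := fun i => decide (#C < 2 * colWeight C i)
  set f : (ι → Bool) → ι → Bool := fun c i => b i ^^ c i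
  have hf : f.Injective := fun c c' h => funext fun i => by
    simpa [f] using congrFun h i
  refine ⟨C.image f, card_image_of_injective C hf, ?_, fun i => ?_⟩
  · simp only [sum_image fun c _ c' _ h => hf h]
    exact sum_congr rfl fun c _ => sum_congr rfl fun c' _ =>
      hammingDist_comp (fun i => (b i ^^ ·)) fun i _ _ => Bool.xor_right_inj.mp
  · rw [card_image_of_injective C hf, colWeight, filter_image, card_image_of_injective _ hf]
    have hsplit := card_filter_add_card_filter_not (s := C) (p := fun c => c i)
    by_cases hb : #C < 2 * colWeight C i
    · have hbi : b i = true := decide_eq_true hb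
      simp only [f, hbi, Bool.not_eq_true, Bool.true_bne, Bool.not_eq_eq_eq_not, Bool.not_true]
        at hsplit ⊢
      rw [colWeight] at hb
      omega
    · have hbi : b i = false := decide_eq_false hb
      simp only [f, hbi, Bool.false_xor]
      rw [colWeight] at hb
      omega

def ones (c : ι → Bool) : Finset ι := {i | c i}

lemma ones_injective : Function.Injective (ones : (ι → Bool) → Finset ι) := fun c c' h =>
  funext fun i => by simpa [ones] using congrArg (i ∈ ·) h

lemma card_filter_ones_subset_le [DecidableEq ι] (C : Finset (ι → Bool)) (I : Finset ι) :
    #{c ∈ C | ones c ⊆ I} ≤ 2 ^ #I := by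
  rw [← card_powerset]
  exact card_le_card_of_injOn ones (fun c hc => mem_powerset.2 (mem_filter.1 hc).2)
    ones_injective.injOn

lemma card_filter_card_ones_le (C : Finset (ι → Bool)) (k : ℕ) :
    #{c ∈ C | #(ones c) = k} ≤ (Fintype.card ι).choose k := by
  rw [← card_univ, ← card_powersetCard]
  exact card_le_card_of_injOn ones
    (fun c hc => mem_powersetCard.2 ⟨subset_univ _, (mem_filter.1 hc).2⟩) ones_injective.injOn

lemma card_add_sum_colWeight_le [DecidableEq ι] (C : Finset (ι → Bool)) (I : Finset ι) :
    #C + ∑ i ∈ I, colWeight C i ≤ 2 ^ #I + ∑ i, colWeight C i := by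
  rw [← sum_add_sum_compl I, sum_colWeight C Iᶜ]
  have houtside : #{c ∈ C | ¬ones c ⊆ I} ≤ ∑ c ∈ C, #{i ∈ Iᶜ | c i} := by
    rw [card_filter]
    refine sum_le_sum fun c _ => ?_
    split_ifs with h
    · exact Nat.zero_le _
    · obtain ⟨i, hi, hiI⟩ := not_subset.1 h
      exact card_pos.2 ⟨i, by simp_all [ones]⟩
  have hsplit := card_filter_add_card_filter_not (s := C) (p := fun c => ones c ⊆ I)
  have hinside := card_filter_ones_subset_le C I
  omega

lemma two_mul_card_le_sum_colWeight (C : Finset (ι → Bool)) :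
    2 * #C ≤ ∑ i, colWeight C i + Fintype.card ι + 2 := by
  have hsum : ∑ i, colWeight C i = ∑ c ∈ C, #(ones c) := sum_colWeight C univ
  have h0 := card_filter_card_ones_le C 0
  have h1 := card_filter_card_ones_le C 1
  rw [Nat.choose_zero_right, card_filter] at h0
  rw [Nat.choose_one_right, card_filter] at h1
  have hpoint (c : ι → Bool) : 2 ≤ #(ones c) + 2 * (if #(ones c) = 0 then 1 else 0) +
      (if #(ones c) = 1 then 1 else 0) := by
    split_ifs <;> omega
  calc 2 * #C = ∑ _c ∈ C, 2 := by rw [sum_const, smul_eq_mul, mul_comm]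
    _ ≤ ∑ c ∈ C, (#(ones c) + 2 * (if #(ones c) = 0 then 1 else 0) +
        (if #(ones c) = 1 then 1 else 0)) := sum_le_sum fun c _ => hpoint c
    _ ≤ ∑ i, colWeight C i + Fintype.card ι + 2 := by
      rw [sum_add_distrib, sum_add_distrib, ← mul_sum, hsum]
      omega

lemma exists_top_three {β : Type*} [LinearOrder β] [DecidableEq ι] (w : ι → β)
    (h : 3 ≤ Fintype.card ι) :
    ∃ i j k, j ≠ i ∧ k ≠ i ∧ k ≠ j ∧ w j ≤ w i ∧ w k ≤ w j ∧
      ∀ l, l ≠ i → l ≠ j → w l ≤ w k := by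
  have : Nonempty ι := Fintype.card_pos_iff.1 (by omega)
  obtain ⟨i, -, hi⟩ := exists_max_image univ w univ_nonempty
  have h1 : (univ.erase i).Nonempty := by
    rw [← card_pos, card_erase_of_mem (mem_univ i), card_univ]; omega
  obtain ⟨j, hj, hj'⟩ := exists_max_image (univ.erase i) w h1
  have h2 : ((univ.erase i).erase j).Nonempty := by
    rw [← card_pos, card_erase_of_mem hj, card_erase_of_mem (mem_univ i), card_univ]; omega
  obtain ⟨k, hk, hk'⟩ := exists_max_image ((univ.erase i).erase j) w h2
  simp only [mem_erase, mem_univ, and_true] at hj hj' hk hk'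
  exact ⟨i, j, k, hj, hk.2, hk.1, hi j (mem_univ j), hj' k hk.2,
    fun l hli hlj => hk' l ⟨hlj, hli⟩⟩

lemma sum_sq_le_of_le [DecidableEq ι] (w : ι → ℝ) (hw : ∀ l, 0 ≤ w l) {i j : ι} (hji : j ≠ i)
    {z : ℝ} (hz : ∀ l, l ≠ i → l ≠ j → w l ≤ z) :
    ∑ l, w l ^ 2 ≤ w i ^ 2 + w j ^ 2 + z * (∑ l, w l - w i - w j) := by
  have hsplit (f : ι → ℝ) : ∑ l, f l = f i + f j + ∑ l ∈ (univ.erase i).erase j, f l := by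
    rw [← add_sum_erase _ _ (mem_univ i), ← add_sum_erase _ _ (mem_erase.2 ⟨hji, mem_univ j⟩),
      add_assoc]
  rw [hsplit, hsplit w]
  have hrest : ∑ l ∈ (univ.erase i).erase j, w l ^ 2 ≤ z * ∑ l ∈ (univ.erase i).erase j, w l := by
    rw [mul_sum]
    refine sum_le_sum fun l hl => ?_
    simp only [mem_erase] at hl
    rw [sq]
    exact mul_le_mul_of_nonneg_right (hz l hl.2.1 hl.1) (hw l)
  linarith

lemma column_weights_quadratic_bound {N x y z S : ℝ} (hz : 0 ≤ z) (hzy : z ≤ y) (hyx : y ≤ x) (hxN : x ≤ N)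
    (hS : 3 * N ≤ S + 2) (hxyz : x + y + z + 2 * N ≤ S + 8) :
    10 * N ^ 2 - 26 * N ≤ 4 * N * S - 2 * (x ^ 2 + y ^ 2 + z * (S - x - y)) := by
  nlinarith

lemma sum_sum_hammingDist_ge (h : 3 ≤ Fintype.card ι) (C : Finset (ι → Bool))
    (hC : #C = 2 * Fintype.card ι) :
    10 * (Fintype.card ι : ℝ) ^ 2 - 26 * Fintype.card ι ≤
      ∑ c ∈ C, ∑ c' ∈ C, (hammingDist c c' : ℝ) := by
  classical
  obtain ⟨D, hDC, hdist, hhalf⟩ := exists_colWeight_le_half C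
  have hdist' : ∑ c ∈ C, ∑ c' ∈ C, (hammingDist c c' : ℝ) =
      ∑ c ∈ D, ∑ c' ∈ D, (hammingDist c c' : ℝ) := by exact_mod_cast hdist.symm
  rw [hdist', sum_sum_hammingDist_eq, hDC, hC]
  set N := Fintype.card ι
  set w : ι → ℝ := fun i => colWeight D i
  obtain ⟨i, j, k, hji, hki, hkj, hij, hjk, htop⟩ := exists_top_three w h
  have hiN : colWeight D i ≤ N := by have := hhalf i; omega
  have hweight := two_mul_card_le_sum_colWeight D
  have htail := card_add_sum_colWeight_le D {i, j, k}
  rw [card_insert_of_notMem (by simp [hji.symm, hki.symm]),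
    card_insert_of_notMem (by simp [hkj.symm]), card_singleton,
    sum_insert (by simp [hji.symm, hki.symm]), sum_insert (by simp [hkj.symm]),
    sum_singleton] at htail
  rw [hDC, hC] at hweight htail
  have hbound := column_weights_quadratic_bound (N := N) (S := ∑ l, w l)
    (Nat.cast_nonneg _) hjk hij (by simp only [w]; exact_mod_cast hiN)
    (by simp only [w]; exact_mod_cast (by omega : 3 * N ≤ ∑ l, colWeight D l + 2))
    (by simp only [w]; exact_mod_cast (by omega : colWeight D i + colWeight D j +
      colWeight D k + 2 * N ≤ ∑ l, colWeight D l + 8))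
  have hsq := sum_sq_le_of_le w (fun l => Nat.cast_nonneg _) hji htop
  have hexpand : ∑ l, 2 * w l * (2 * N - w l) = 4 * N * ∑ l, w l - 2 * ∑ l, w l ^ 2 := by
    rw [mul_sum, mul_sum, ← sum_sub_distrib]
    exact sum_congr rfl fun l _ => by ring
  push_cast
  rw [hexpand]
  linarith

section StarCode

variable [DecidableEq ι]

def starCode (i₀ : ι) : Finset (ι → Bool) :=
  univ.image fun p : Bool × ι => starWord i₀ p.1 p.2

lemma card_starCode (i₀ : ι) : #(starCode i₀) = 2 * Fintype.card ι := by
  rw [starCode, card_image_of_injective _ (starWord_injective i₀), card_univ, Fintype.card_prod,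
    Fintype.card_bool]

lemma colWeight_starCode (i₀ i : ι) :
    colWeight (starCode i₀) i = if i = i₀ then Fintype.card ι else 2 := by
  rw [colWeight, starCode, filter_image, card_image_of_injective _ (starWord_injective i₀),
    card_filter, Fintype.sum_prod_type, Fintype.sum_bool]
  split_ifs with h
  · subst h
    simpa [starWord, sum_ite, filter_ne] using Nat.sub_add_cancel (Fintype.card_pos_iff.2 ⟨i⟩)
  · simp [starWord, h]

lemma sum_sum_hammingDist_starCode (i₀ : ι) :
    ∑ c ∈ starCode i₀, ∑ c' ∈ starCode i₀, (hammingDist c c' : ℝ) =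
      2 * (Fintype.card ι : ℝ) ^ 2 + 8 * ((Fintype.card ι : ℝ) - 1) ^ 2 := by
  rw [sum_sum_hammingDist_eq, card_starCode, ← add_sum_erase _ _ (mem_univ i₀),
    sum_congr rfl fun i hi => by rw [colWeight_starCode, if_neg (ne_of_mem_erase hi)],
    colWeight_starCode, if_pos rfl, sum_const, card_erase_of_mem (mem_univ i₀), card_univ,
    nsmul_eq_mul, Nat.cast_sub (Fintype.card_pos_iff.2 ⟨i₀⟩)]
  push_cast
  ring

end StarCode

lemma beta_le_avgDist {n : ℕ} (C : Finset (Fin n → Bool)) : beta n #C ≤ avgDist n C := by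
  refine csInf_le ⟨0, ?_⟩ ⟨C, rfl, rfl⟩
  rintro _ ⟨D, -, rfl⟩
  unfold avgDist
  positivity

lemma le_beta {n M : ℕ} {x : ℝ} (hM : M ≤ 2 ^ n)
    (h : ∀ C : Finset (Fin n → Bool), #C = M → x ≤ avgDist n C) : x ≤ beta n M := by
  obtain ⟨C, -, hC⟩ := exists_subset_card_eq (s := (univ : Finset (Fin n → Bool)))
    (by simpa using hM)
  exact le_csInf ⟨_, C, hC, rfl⟩ fun _ ⟨C, hC, hx⟩ => hx ▸ h C hC

lemma beta_two_mul_le (n : ℕ) : beta n (2 * n) ≤ 5 / 2 - (4 * (n : ℝ) - 2) / (n : ℝ) ^ 2 := by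
  rcases Nat.eq_zero_or_pos n with rfl | hn
  · have := beta_le_avgDist (∅ : Finset (Fin 0 → Bool))
    simp only [avgDist, card_empty, sum_empty, mul_zero] at this ⊢
    norm_num
    linarith
  have hcard := card_starCode (⟨0, hn⟩ : Fin n)
  rw [Fintype.card_fin] at hcard
  refine (hcard ▸ beta_le_avgDist (starCode ⟨0, hn⟩)).trans_eq ?_
  rw [avgDist, sum_sum_hammingDist_starCode, hcard, Fintype.card_fin]
  have : (n : ℝ) ≠ 0 := by positivity
  field_simp
  push_cast
  ring

lemma le_beta_two_mul {n : ℕ} (hn : 3 ≤ n) : 5 / 2 - 13 / (2 * (n : ℝ)) ≤ beta n (2 * n) := by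
  refine le_beta ?_ fun C hC => ?_
  · have hpred : n - 1 < 2 ^ (n - 1) := Nat.lt_two_pow_self
    have hpow : 2 ^ n = 2 * 2 ^ (n - 1) := by rw [← pow_succ']; congr; omega
    omega
  have hsum := sum_sum_hammingDist_ge (by simpa using hn) C (by simpa using hC)
  rw [Fintype.card_fin] at hsum
  have : (0 : ℝ) < n := by positivity
  calc 5 / 2 - 13 / (2 * (n : ℝ)) = (10 * (n : ℝ) ^ 2 - 26 * n) / (2 * n) ^ 2 := by
        field_simp
        ring
    _ ≤ (∑ c ∈ C, ∑ c' ∈ C, (hammingDist c c' : ℝ)) / (2 * n) ^ 2 := by gcongr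
    _ = avgDist n C := by rw [avgDist, hC, one_div_mul_eq_div]; push_cast; rfl

end BinaryCode

theorem stmt_19 :
    Filter.Tendsto (fun n : ℕ => beta n (2 * n)) Filter.atTop (nhds (5 / 2)) ∧
      (∀ n : ℕ, beta n (2 * n) ≤ 5 / 2 - (4 * (n : ℝ) - 2) / (n : ℝ) ^ 2) ∧
      (∀ᶠ n : ℕ in Filter.atTop, beta n (2 * n) ≥ 5 / 2 - 13 / (2 * (n : ℝ))) := by
  have hlower : ∀ᶠ n : ℕ in Filter.atTop, 5 / 2 - 13 / (2 * (n : ℝ)) ≤ beta n (2 * n) :=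
    Filter.eventually_atTop.2 ⟨3, fun n hn => BinaryCode.le_beta_two_mul hn⟩
  have hupper : ∀ᶠ n : ℕ in Filter.atTop, beta n (2 * n) ≤ 5 / 2 :=
    Filter.eventually_atTop.2 ⟨1, fun n hn => (BinaryCode.beta_two_mul_le n).trans <|
      sub_le_self _ <| div_nonneg (by linarith [(Nat.one_le_cast (α := ℝ)).2 hn]) (by positivity)⟩
  have hlim : Filter.Tendsto (fun n : ℕ => 5 / 2 - 13 / (2 * (n : ℝ))) Filter.atTop
      (nhds (5 / 2)) := by
    simpa [div_mul_eq_div_div] using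
      tendsto_const_nhds.sub (tendsto_const_div_atTop_nhds_zero_nat (13 / 2 : ℝ))
  exact ⟨tendsto_of_tendsto_of_tendsto_of_le_of_le' hlim tendsto_const_nhds hlower hupper,
    BinaryCode.beta_two_mul_le, hlower⟩
end
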